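/- arXiv:1711.03012 — 2 statements merged into one kernel-verified Lean document; each statement's English description precedes it below -/
import Mathlib

section
/- Let O ⊆ ℝ^d be an open set, let k ∈ ℝ with k ≠ 0, let n : O → ℝ be smooth with n(x) ≠ 0 for all x ∈ O, and let w : O → ℂ be smooth. Then the following are equivalent: (i) there exists a smooth function v : O → ℂ with Δv = 0 on O and Δw + k² n w = −k² n v on O; (ii) w satisfies the fourth-order (plate-buckling type) equation Δ( n^{-1} Δw ) = −k² Δw on O. Moreover, in this case v is given by v = −w − (k²)^{-1} n^{-1} Δw. -/
/-- The Laplacian of `f : ℝ^d → ℂ`: the sum of the second derivatives in the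
coordinate directions (trace of the second derivative). -/
noncomputable def lap {d : ℕ} (f : EuclideanSpace ℝ (Fin d) → ℂ)
    (x : EuclideanSpace ℝ (Fin d)) : ℂ :=
  ∑ i : Fin d,
    iteratedFDeriv ℝ 2 f x ![EuclideanSpace.single i 1, EuclideanSpace.single i 1]

noncomputable def lapW {d : ℕ} (f : EuclideanSpace ℝ (Fin d) → ℂ)
    (O : Set (EuclideanSpace ℝ (Fin d))) (x : EuclideanSpace ℝ (Fin d)) : ℂ :=
  ∑ i : Fin d,
    iteratedFDerivWithin ℝ 2 f O x ![EuclideanSpace.single i 1, EuclideanSpace.single i 1]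

section helpers
variable {d : ℕ} {O : Set (EuclideanSpace ℝ (Fin d))} {f g : EuclideanSpace ℝ (Fin d) → ℂ}
  {x : EuclideanSpace ℝ (Fin d)}

theorem lap_eq_lapW (hO : IsOpen O) (hx : x ∈ O) : lap f x = lapW f O x := by
  unfold lap lapW
  exact Finset.sum_congr rfl fun i _ => by
    rw [iteratedFDerivWithin_of_isOpen 2 hO hx]

theorem lapW_congr (h : Set.EqOn f g O) (hx : x ∈ O) : lapW f O x = lapW g O x := by
  unfold lapW
  exact Finset.sum_congr rfl fun i _ => by
    rw [iteratedFDerivWithin_congr h hx]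

theorem lapW_add (hO : IsOpen O) (hf : ContDiffOn ℝ 2 f O) (hg : ContDiffOn ℝ 2 g O)
    (hx : x ∈ O) : lapW (fun y => f y + g y) O x = lapW f O x + lapW g O x := by
  unfold lapW
  rw [← Finset.sum_add_distrib]
  exact Finset.sum_congr rfl fun i _ => by
    rw [iteratedFDerivWithin_add_apply' (hf x hx) (hg x hx) hO.uniqueDiffOn hx]; rfl

theorem lapW_smul (hO : IsOpen O) (a : ℂ) (hf : ContDiffOn ℝ 2 f O) (hx : x ∈ O) :
    lapW (fun y => a * f y) O x = a * lapW f O x := by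
  unfold lapW
  rw [Finset.mul_sum]
  refine Finset.sum_congr rfl fun i _ => ?_
  have : (fun y => a * f y) = a • f := by ext y; simp [smul_eq_mul]
  rw [this, iteratedFDerivWithin_const_smul_apply (hf x hx) hO.uniqueDiffOn hx]
  rfl

theorem contDiffOn_lapW (hO : IsOpen O) (hf : ContDiffOn ℝ (⊤ : ℕ∞) f O) :
    ContDiffOn ℝ (⊤ : ℕ∞) (lapW f O) O := by
  unfold lapW
  refine ContDiffOn.sum fun i _ => ?_
  have h1 : ContDiffOn ℝ (⊤ : ℕ∞) (iteratedFDerivWithin ℝ 2 f O) O := fun y hy =>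
    (hf y hy).iteratedFDerivWithin_right hO.uniqueDiffOn (by rw [← WithTop.coe_natCast, ← WithTop.coe_add, top_add]) hy
  exact ContDiffOn.continuousLinearMap_comp (ContinuousMultilinearMap.apply ℝ
    (fun _ : Fin 2 => EuclideanSpace ℝ (Fin d)) ℂ
    ![EuclideanSpace.single i 1, EuclideanSpace.single i 1]) h1

end helpers


/-- For `k ≠ 0` and a smooth index `n` with `n ≠ 0` on an open set `O`,
a smooth `w` solves the ZIM interior transmission system `Δv = 0`,
`Δw + k² n w = −k² n v` for some smooth `v` on `O` if and only if `w` solves the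
plate-buckling type equation `Δ(n⁻¹ Δw) = −k² Δw` on `O`; moreover in that case
`v = −w − (k²)⁻¹ n⁻¹ Δw` on `O`. -/
theorem zim_itp_fourth_order_equiv (d : ℕ) (O : Set (EuclideanSpace ℝ (Fin d))) (hO : IsOpen O)
    (k : ℝ) (hk : k ≠ 0) (n : EuclideanSpace ℝ (Fin d) → ℝ)
    (hn : ContDiffOn ℝ (⊤ : ℕ∞) (fun x => (n x : ℝ)) O) (hn0 : ∀ x ∈ O, n x ≠ 0)
    (w : EuclideanSpace ℝ (Fin d) → ℂ) (hw : ContDiffOn ℝ (⊤ : ℕ∞) w O) :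
    ((∃ v : EuclideanSpace ℝ (Fin d) → ℂ, ContDiffOn ℝ (⊤ : ℕ∞) v O ∧
        (∀ x ∈ O, lap v x = 0) ∧
        (∀ x ∈ O, lap w x + (k : ℂ) ^ 2 * (n x : ℂ) * w x
          = -((k : ℂ) ^ 2) * (n x : ℂ) * v x))
      ↔
      (∀ x ∈ O, lap (fun y => ((n y : ℂ))⁻¹ * lap w y) x = -((k : ℂ) ^ 2) * lap w x))
    ∧
    (∀ v : EuclideanSpace ℝ (Fin d) → ℂ, ContDiffOn ℝ (⊤ : ℕ∞) v O →
      (∀ x ∈ O, lap v x = 0) →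
      (∀ x ∈ O, lap w x + (k : ℂ) ^ 2 * (n x : ℂ) * w x
        = -((k : ℂ) ^ 2) * (n x : ℂ) * v x) →
      ∀ x ∈ O, v x = -w x - ((k : ℂ) ^ 2)⁻¹ * ((n x : ℂ))⁻¹ * lap w x) := by
  have hk' : ((k : ℂ)) ≠ 0 := Complex.ofReal_ne_zero.mpr hk
  have hc0 : ((k : ℂ) ^ 2) ≠ 0 := pow_ne_zero _ hk'
  have hm : ContDiffOn ℝ (⊤ : ℕ∞) (fun x => ((n x : ℂ))) O := by
    have := ContDiffOn.continuousLinearMap_comp Complex.ofRealCLM hn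
    exact this
  have hm0 : ∀ x ∈ O, ((n x : ℂ)) ≠ 0 := fun x hx => Complex.ofReal_ne_zero.mpr (hn0 x hx)
  have hminv : ContDiffOn ℝ (⊤ : ℕ∞) (fun x => ((n x : ℂ))⁻¹) O := hm.inv hm0
  have hlw : ContDiffOn ℝ (⊤ : ℕ∞) (lapW w O) O := contDiffOn_lapW hO hw
  set q : EuclideanSpace ℝ (Fin d) → ℂ := fun y => ((n y : ℂ))⁻¹ * lapW w O y with hq_def
  have hq : ContDiffOn ℝ (⊤ : ℕ∞) q O := hminv.mul hlw
  set V : EuclideanSpace ℝ (Fin d) → ℂ :=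
    fun y => (-1 : ℂ) * w y + (-((k : ℂ) ^ 2)⁻¹) * q y with hV_def
  have hVsmooth : ContDiffOn ℝ (⊤ : ℕ∞) V O := (contDiffOn_const.mul hw).add (contDiffOn_const.mul hq)
  have hlapV : ∀ x ∈ O, lapW V O x = -lapW w O x + (-((k : ℂ) ^ 2)⁻¹) * lapW q O x := by
    intro x hx
    rw [hV_def]
    rw [lapW_add hO ((contDiffOn_const.mul hw).of_le (by rw [← WithTop.coe_ofNat]; exact WithTop.coe_le_coe.mpr le_top))
        ((contDiffOn_const.mul hq).of_le (by rw [← WithTop.coe_ofNat]; exact WithTop.coe_le_coe.mpr le_top)) hx,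
      lapW_smul hO _ (hw.of_le (by rw [← WithTop.coe_ofNat]; exact WithTop.coe_le_coe.mpr le_top)) hx, lapW_smul hO _ (hq.of_le (by rw [← WithTop.coe_ofNat]; exact WithTop.coe_le_coe.mpr le_top)) hx]
    ring
  have hqeq : ∀ x ∈ O, lap (fun y => ((n y : ℂ))⁻¹ * lap w y) x = lapW q O x := by
    intro x hx
    rw [lap_eq_lapW hO hx]
    exact lapW_congr (fun y hy => by rw [hq_def]; simp only; rw [lap_eq_lapW hO hy]) hx
  have hmoreover : ∀ v : EuclideanSpace ℝ (Fin d) → ℂ,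
      (∀ x ∈ O, lap w x + (k : ℂ) ^ 2 * (n x : ℂ) * w x
        = -((k : ℂ) ^ 2) * (n x : ℂ) * v x) →
      ∀ x ∈ O, v x = -w x - ((k : ℂ) ^ 2)⁻¹ * ((n x : ℂ))⁻¹ * lap w x := by
    intro v heq x hx
    have h2 := heq x hx
    have hmx := hm0 x hx
    have h3 : (-((k : ℂ) ^ 2) * (n x : ℂ)) * v x
        = (-((k : ℂ) ^ 2) * (n x : ℂ)) * (-w x - ((k : ℂ) ^ 2)⁻¹ * ((n x : ℂ))⁻¹ * lap w x) := by
      rw [← h2]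
      field_simp
      ring
    exact mul_left_cancel₀ (mul_ne_zero (neg_ne_zero.mpr hc0) hmx) h3
  refine ⟨⟨?_, ?_⟩, fun v _ _ heq => hmoreover v heq⟩
  · rintro ⟨v, hvs, hlapv, heq⟩ x hx
    have hveq : Set.EqOn v V O := by
      intro y hy
      have h5 := hmoreover v heq y hy
      rw [hV_def]
      simp only [hq_def]
      rw [h5, lap_eq_lapW hO hy]
      ring
    have h0 : -lapW w O x + (-((k : ℂ) ^ 2)⁻¹) * lapW q O x = 0 := by
      rw [← hlapV x hx, ← lapW_congr hveq hx, ← lap_eq_lapW hO hx]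
      exact hlapv x hx
    rw [hqeq x hx, lap_eq_lapW hO hx]
    have h1 : (-((k : ℂ) ^ 2)⁻¹) * lapW q O x = lapW w O x := by linear_combination h0
    calc lapW q O x = (-((k : ℂ) ^ 2)) * ((-((k : ℂ) ^ 2)⁻¹) * lapW q O x) := by
          field_simp
      _ = -((k : ℂ) ^ 2) * lapW w O x := by rw [h1]
  · intro h4
    refine ⟨V, hVsmooth, fun x hx => ?_, fun x hx => ?_⟩
    · rw [lap_eq_lapW hO hx, hlapV x hx]
      have hq4 : lapW q O x = -((k : ℂ) ^ 2) * lapW w O x := by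
        rw [← hqeq x hx, h4 x hx, lap_eq_lapW hO hx]
      rw [hq4]
      field_simp
      ring
    · rw [hV_def]
      simp only [hq_def]
      rw [← lap_eq_lapW hO hx]
      field_simp [hm0 x hx]
      ring
end

section
/- Let O ⊆ ℝ^d be an open set, let k ∈ ℝ with k ≠ 0, let n, ρ : O → ℝ be smooth functions with n(x) − ρ(x) ≠ 0 for all x ∈ O, and let w : O → ℂ be smooth. Then the following are equivalent: (i) there exists a smooth function v : O → ℂ with Δv + k² ρ v = 0 on O and Δw + k² n w = k² (ρ − n) v on O; (ii) w satisfies the fourth-order equation (Δ + k² ρ)( (n − ρ)^{-1} (Δw + k² n w) ) = 0 on O. -/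
section aux

variable {d : ℕ} {O : Set (EuclideanSpace ℝ (Fin d))}

/-- On an open set, `lap` can be computed via `iteratedFDerivWithin`. -/
lemma lap_eq_within (f : EuclideanSpace ℝ (Fin d) → ℂ) (hO : IsOpen O)
    {x : EuclideanSpace ℝ (Fin d)} (hx : x ∈ O) :
    lap f x = ∑ i : Fin d,
      iteratedFDerivWithin ℝ 2 f O x ![EuclideanSpace.single i 1, EuclideanSpace.single i 1] := by
  unfold lap
  refine Finset.sum_congr rfl fun i _ => ?_
  rw [iteratedFDerivWithin_of_isOpen 2 hO hx]

/-- `lap` only depends on values on an open set. -/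
lemma lap_congr {f g : EuclideanSpace ℝ (Fin d) → ℂ} (hO : IsOpen O)
    (h : Set.EqOn f g O) {x : EuclideanSpace ℝ (Fin d)} (hx : x ∈ O) :
    lap f x = lap g x := by
  rw [lap_eq_within f hO hx, lap_eq_within g hO hx]
  refine Finset.sum_congr rfl fun i _ => ?_
  rw [h.iteratedFDerivWithin 2 hx]

/-- `lap` commutes with multiplication by a constant for `C²` functions on an open set. -/
lemma lap_const_mul {f : EuclideanSpace ℝ (Fin d) → ℂ} (hO : IsOpen O)
    (hf : ContDiffOn ℝ 2 f O) (c : ℂ) {x : EuclideanSpace ℝ (Fin d)} (hx : x ∈ O) :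
    lap (fun y => c * f y) x = c * lap f x := by
  rw [lap_eq_within _ hO hx, lap_eq_within f hO hx, Finset.mul_sum]
  refine Finset.sum_congr rfl fun i _ => ?_
  have h1 : (fun y => c * f y) = c • f := rfl
  rw [h1, iteratedFDerivWithin_const_smul_apply (hf x hx) hO.uniqueDiffOn hx]
  simp

/-- `lap f` is smooth on an open set whenever `f` is. -/
lemma lap_contDiffOn {f : EuclideanSpace ℝ (Fin d) → ℂ} (hO : IsOpen O)
    (hf : ContDiffOn ℝ (⊤ : ℕ∞) f O) : ContDiffOn ℝ (⊤ : ℕ∞) (lap f) O := by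
  have h2 : ContDiffOn ℝ (⊤ : ℕ∞) (iteratedFDerivWithin ℝ 2 f O) O := by
    intro x hx
    exact (hf x hx).iteratedFDerivWithin_right hO.uniqueDiffOn (by exact le_of_eq (WithTop.coe_add (⊤ : ℕ∞) 2).symm) hx
  refine ContDiffOn.congr ?_ (fun x hx => lap_eq_within f hO hx)
  refine ContDiffOn.sum fun i _ => ?_
  exact (ContinuousMultilinearMap.apply ℝ (fun _ : Fin 2 => EuclideanSpace ℝ (Fin d)) ℂ
    ![EuclideanSpace.single i 1, EuclideanSpace.single i 1]).contDiff.comp_contDiffOn h2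

end aux

/-- For `k ≠ 0` and smooth real indices `n, ρ` with `n − ρ ≠ 0` on an open
set `O`, a smooth `w` solves the interior transmission system `Δv + k² ρ v = 0`,
`Δw + k² n w = k² (ρ − n) v` for some smooth `v` on `O` if and only if `w` solves the
fourth-order equation `(Δ + k² ρ)((n − ρ)⁻¹ (Δw + k² n w)) = 0` on `O`. -/
theorem artificial_background_itp_fourth_order_equiv (d : ℕ)
    (O : Set (EuclideanSpace ℝ (Fin d))) (hO : IsOpen O)
    (k : ℝ) (hk : k ≠ 0) (n ρ : EuclideanSpace ℝ (Fin d) → ℝ)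
    (hn : ContDiffOn ℝ (⊤ : ℕ∞) (fun x => (n x : ℝ)) O)
    (hρ : ContDiffOn ℝ (⊤ : ℕ∞) (fun x => (ρ x : ℝ)) O)
    (hnρ : ∀ x ∈ O, n x - ρ x ≠ 0)
    (w : EuclideanSpace ℝ (Fin d) → ℂ) (hw : ContDiffOn ℝ (⊤ : ℕ∞) w O) :
    (∃ v : EuclideanSpace ℝ (Fin d) → ℂ, ContDiffOn ℝ (⊤ : ℕ∞) v O ∧
        (∀ x ∈ O, lap v x + (k : ℂ) ^ 2 * (ρ x : ℂ) * v x = 0) ∧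
        (∀ x ∈ O, lap w x + (k : ℂ) ^ 2 * (n x : ℂ) * w x
          = (k : ℂ) ^ 2 * ((ρ x : ℂ) - (n x : ℂ)) * v x))
      ↔
      (∀ x ∈ O,
        lap (fun y => ((n y : ℂ) - (ρ y : ℂ))⁻¹ * (lap w y + (k : ℂ) ^ 2 * (n y : ℂ) * w y)) x
          + (k : ℂ) ^ 2 * (ρ x : ℂ)
            * (((n x : ℂ) - (ρ x : ℂ))⁻¹ * (lap w x + (k : ℂ) ^ 2 * (n x : ℂ) * w x))
          = 0) := by
  have hkC : (k : ℂ) ≠ 0 := by exact_mod_cast hk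
  have hnρC : ∀ x ∈ O, (n x : ℂ) - (ρ x : ℂ) ≠ 0 := by
    intro x hx
    rw [← Complex.ofReal_sub]
    exact Complex.ofReal_ne_zero.mpr (hnρ x hx)
  set g : EuclideanSpace ℝ (Fin d) → ℂ :=
    fun y => ((n y : ℂ) - (ρ y : ℂ))⁻¹ * (lap w y + (k : ℂ) ^ 2 * (n y : ℂ) * w y) with hg
  constructor
  · rintro ⟨v, hv, h1, h2⟩ x hx
    have hgv : Set.EqOn g (fun y => (-(k : ℂ) ^ 2) * v y) O := by
      intro y hy
      have h2y := h2 y hy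
      have hne := hnρC y hy
      simp only [hg]
      rw [h2y]
      field_simp
      ring
    have hlg : lap g x = (-(k : ℂ) ^ 2) * lap v x := by
      rw [lap_congr hO hgv hx, lap_const_mul hO (hv.of_le (WithTop.coe_le_coe.mpr le_top)) _ hx]
    have hgx : g x = (-(k : ℂ) ^ 2) * v x := hgv hx
    have h1x := h1 x hx
    calc lap g x + (k : ℂ) ^ 2 * (ρ x : ℂ) * g x
        = (-(k : ℂ) ^ 2) * (lap v x + (k : ℂ) ^ 2 * (ρ x : ℂ) * v x) := by
          rw [hlg, hgx]; ring
      _ = 0 := by rw [h1x, mul_zero]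
  · intro h
    have hnC : ContDiffOn ℝ (⊤ : ℕ∞) (fun x => ((n x : ℂ))) O :=
      Complex.ofRealCLM.contDiff.comp_contDiffOn hn
    have hρC : ContDiffOn ℝ (⊤ : ℕ∞) (fun x => ((ρ x : ℂ))) O :=
      Complex.ofRealCLM.contDiff.comp_contDiffOn hρ
    have hinv : ContDiffOn ℝ (⊤ : ℕ∞) (fun x => ((n x : ℂ) - (ρ x : ℂ))⁻¹) O :=
      (hnC.sub hρC).inv hnρC
    have hLw : ContDiffOn ℝ (⊤ : ℕ∞) (fun x => lap w x + (k : ℂ) ^ 2 * (n x : ℂ) * w x) O :=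
      (lap_contDiffOn hO hw).add ((contDiffOn_const.mul hnC).mul hw)
    have hgC : ContDiffOn ℝ (⊤ : ℕ∞) g O := hinv.mul hLw
    refine ⟨fun y => (-(k : ℂ) ^ 2)⁻¹ * g y,
      hgC.const_smul ((-(k : ℂ) ^ 2)⁻¹), ?_, ?_⟩
    · intro x hx
      have hlv : lap (fun y => (-(k : ℂ) ^ 2)⁻¹ * g y) x = (-(k : ℂ) ^ 2)⁻¹ * lap g x :=
        lap_const_mul hO (hgC.of_le (WithTop.coe_le_coe.mpr le_top)) _ hx
      have hx0 := h x hx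
      calc lap (fun y => (-(k : ℂ) ^ 2)⁻¹ * g y) x
            + (k : ℂ) ^ 2 * (ρ x : ℂ) * ((-(k : ℂ) ^ 2)⁻¹ * g x)
          = (-(k : ℂ) ^ 2)⁻¹ * (lap g x + (k : ℂ) ^ 2 * (ρ x : ℂ) * g x) := by
            rw [hlv]; ring
        _ = 0 := by rw [hx0, mul_zero]
    · intro x hx
      have hne := hnρC x hx
      simp only [hg]
      field_simp
      ring
end
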